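/- Let M be one of the left Λ-modules M(0,1,0) or M(0,0,1). Then there is no injective Λ-linear map φ : M → Λ with the property that every Λ-linear map ψ : M → Λ factors as ψ = g ∘ φ for some Λ-linear map g : Λ → Λ (that is, no monomorphism M → Λ is a left add(Λ)-approximation). -/

import Mathlib

open CategoryTheory Limits Opposite

/-- The algebra `Λ = Λ(q)` of Ringel–Zhang: a `k`-algebra with distinguished elements
`x, y, z` satisfying the defining relations
`x² = y² = z² = 0`, `yz = 0`, `xy + q·yx = 0`, `xz = zx`, `zy = zx`,
and admitting the `k`-basis `{1, x, y, z, yx, zx}`.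
Any such algebra is canonically isomorphic to the quotient of the free algebra
`k⟨x,y,z⟩` by the two-sided ideal generated by these relations. -/
structure LambdaAlg (k : Type) [Field k] (q : k) (Λ : Type) [Ring Λ] [Algebra k Λ] :
    Type where
  x : Λ
  y : Λ
  z : Λ
  hxx : x * x = 0
  hyy : y * y = 0
  hzz : z * z = 0
  hyz : y * z = 0
  hxy : x * y + q • (y * x) = 0
  hxz : x * z - z * x = 0
  hzy : z * y - z * x = 0
  basis : Module.Basis (Fin 6) k Λ
  hb0 : basis 0 = 1
  hb1 : basis 1 = x
  hb2 : basis 2 = y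
  hb3 : basis 3 = z
  hb4 : basis 4 = y * x
  hb5 : basis 5 = z * x

namespace LambdaAlg

variable {k : Type} [Field k] {q : k} {Λ : Type} [Ring Λ] [Algebra k Λ]

/-- The element `ax + by + cz` of `Λ`. -/
def w (D : LambdaAlg k q Λ) (a b c : k) : Λ := a • D.x + b • D.y + c • D.z

/-- The left ideal `U(a,b,c) = Λ(ax+by+cz) + Λ·yx + Λ·zx` of `Λ`. -/
def U (D : LambdaAlg k q Λ) (a b c : k) : Submodule Λ Λ :=
  Submodule.span Λ {D.w a b c, D.y * D.x, D.z * D.x}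

/-- The left `Λ`-module `M(a,b,c) = Λ/U(a,b,c)`. -/
abbrev M (D : LambdaAlg k q Λ) (a b c : k) : Type := Λ ⧸ D.U a b c

/-- The right ideal `U′(a,b,c) = (ax+by+cz)Λ + yx·Λ + zx·Λ` of `Λ`,
viewed as a `Λᵐᵒᵖ`-submodule of `Λ`. -/
def U' (D : LambdaAlg k q Λ) (a b c : k) : Submodule Λᵐᵒᵖ Λ :=
  Submodule.span Λᵐᵒᵖ {D.w a b c, D.y * D.x, D.z * D.x}

/-- The right `Λ`-module `M′(a,b,c) = Λ/U′(a,b,c)` (a module over `Λᵐᵒᵖ`). -/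
abbrev M' (D : LambdaAlg k q Λ) (a b c : k) : Type := Λ ⧸ D.U' a b c

/-- The `k`-subspace `{m ∈ M : x·m = y·m = z·m = 0}` of a left `Λ`-module `M`;
since `x, y, z` generate `rad Λ` and every simple `Λ`-module is isomorphic to `k`,
this is the socle of `M`. -/
def ann (D : LambdaAlg k q Λ) (M : Type) [AddCommGroup M] [Module k M] [Module Λ M]
    [IsScalarTower k Λ M] : Submodule k M where
  carrier := {m | D.x • m = 0 ∧ D.y • m = 0 ∧ D.z • m = 0}
  add_mem' := by
    rintro a b ⟨h1, h2, h3⟩ ⟨g1, g2, g3⟩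
    simp [smul_add, h1, h2, h3, g1, g2, g3]
  zero_mem' := by simp
  smul_mem' := by
    rintro a m ⟨h1, h2, h3⟩
    refine ⟨?_, ?_, ?_⟩ <;> rw [smul_comm] <;> simp [h1, h2, h3]

/-- The submodule `(rad Λ)·M = x·M + y·M + z·M` of a left `Λ`-module `M`. -/
def radM (D : LambdaAlg k q Λ) (M : Type) [AddCommGroup M] [Module Λ M] :
    Submodule Λ M :=
  Submodule.span Λ
    (Set.range (fun m : M => D.x • m) ∪ Set.range (fun m : M => D.y • m) ∪
      Set.range (fun m : M => D.z • m))

end LambdaAlg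

/-- A module is indecomposable if it is nonzero and is not the direct sum of two
nonzero submodules. -/
def IsIndecomposable (R : Type) [Ring R] (M : Type) [AddCommGroup M] [Module R M] :
    Prop :=
  Nontrivial M ∧
    ∀ N₁ N₂ : Submodule R M, N₁ ⊓ N₂ = ⊥ → N₁ ⊔ N₂ = ⊤ → N₁ = ⊥ ∨ N₂ = ⊥

/-- A module is torsionless if it admits an injective linear map into a finite free
module. -/
def IsTorsionless (R : Type) [Ring R] (M : Type) [AddCommGroup M] [Module R M] : Prop :=
  ∃ (n : ℕ) (f : M →ₗ[R] (Fin n → R)), Function.Injective f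

/-- The canonical evaluation map `M → M** = Hom_{Λᵒᵖ}(Hom_Λ(M, Λ), Λ)`,
sending `m` to `f ↦ f m`. -/
def evalMap (Λ : Type) [Ring Λ] (M : Type) [AddCommGroup M] [Module Λ M] :
    M → ((M →ₗ[Λ] Λ) →ₗ[Λᵐᵒᵖ] Λ) := fun m =>
  { toFun := fun f => f m
    map_add' := fun _ _ => rfl
    map_smul' := fun _ _ => rfl }

/-- The transformation `ω′(a,b,c) = (a, q⁻¹b, −((a+q⁻¹b)/a)·c)` on triples. -/
def omegaPrime {k : Type} [Field k] (q : k) (t : k × k × k) : k × k × k :=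
  (t.1, q⁻¹ * t.2.1, -((t.1 + q⁻¹ * t.2.1) / t.1) * t.2.2)

/-!
A linear map `φ : Λ ⧸ U → Λ` is right multiplication by `u = φ 1`, and `u ∈ rad Λ` because the
generator `w = by + cz` of `U = U(0,b,c)` satisfies `w * u = 0`. Right multiplication by `z`
kills `U`, so if every map `Λ ⧸ U → Λ` factors through `φ`, then `z = u * v` for some `v`.
Since `y * z = z * z = 0` while `x * z ≠ 0`, this forces `y * u = z * u = 0`, so for injective `φ`
both `y` and `z` lie in `U`. But right multiplication by `y` (resp. `x - y`) kills `U(0,1,0)`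
(resp. `U(0,0,1)`) and not `z` (resp. `y`).
-/

section QuotientMaps

variable {R : Type*} [Ring R] {I : Submodule R R}

theorem LinearMap.apply_quotient_mk_eq_mul (φ : (R ⧸ I) →ₗ[R] R) (a : R) :
    φ (Submodule.Quotient.mk a) = a * φ (Submodule.Quotient.mk 1) := by
  rw [← smul_eq_mul, ← map_smul, ← Submodule.Quotient.mk_smul, smul_eq_mul, mul_one]

theorem exists_eq_mul_of_liftQ_eq_comp (φ : (R ⧸ I) →ₗ[R] R) {t : R}
    (ht : I ≤ LinearMap.ker (LinearMap.toSpanSingleton R R t)) {g : R →ₗ[R] R}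
    (hg : I.liftQ (LinearMap.toSpanSingleton R R t) ht = g ∘ₗ φ) :
    ∃ v, t = φ (Submodule.Quotient.mk 1) * v := by
  refine ⟨g 1, ?_⟩
  have h := LinearMap.congr_fun hg (Submodule.Quotient.mk 1)
  rw [Submodule.liftQ_apply, LinearMap.toSpanSingleton_apply, one_smul] at h
  rw [h, LinearMap.comp_apply, ← smul_eq_mul, ← map_smul, smul_eq_mul, mul_one]

end QuotientMaps

namespace LambdaAlg

variable {k : Type} [Field k] {q : k} {Λ : Type} [Ring Λ] [Algebra k Λ] (D : LambdaAlg k q Λ)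

theorem x_mul_y : D.x * D.y = (-q) • (D.y * D.x) := by
  rw [neg_smul]; exact eq_neg_of_add_eq_zero_left D.hxy

theorem x_mul_z : D.x * D.z = D.z * D.x := sub_eq_zero.mp D.hxz

theorem z_mul_y : D.z * D.y = D.z * D.x := sub_eq_zero.mp D.hzy

@[simp] theorem repr_x : D.basis.repr D.x = Finsupp.single 1 1 := by
  rw [← D.hb1, Module.Basis.repr_self]

@[simp] theorem repr_y : D.basis.repr D.y = Finsupp.single 2 1 := by
  rw [← D.hb2, Module.Basis.repr_self]

@[simp] theorem repr_z : D.basis.repr D.z = Finsupp.single 3 1 := by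
  rw [← D.hb3, Module.Basis.repr_self]

@[simp] theorem repr_yx : D.basis.repr (D.y * D.x) = Finsupp.single 4 1 := by
  rw [← D.hb4, Module.Basis.repr_self]

@[simp] theorem repr_zx : D.basis.repr (D.z * D.x) = Finsupp.single 5 1 := by
  rw [← D.hb5, Module.Basis.repr_self]

theorem yx_ne_zero : D.y * D.x ≠ 0 := D.hb4 ▸ D.basis.ne_zero 4

theorem zx_ne_zero : D.z * D.x ≠ 0 := D.hb5 ▸ D.basis.ne_zero 5

theorem mul_eq_sum_repr (a v : Λ) :
    a * v = D.basis.repr v 0 • a + D.basis.repr v 1 • (a * D.x) +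
      D.basis.repr v 2 • (a * D.y) + D.basis.repr v 3 • (a * D.z) +
      D.basis.repr v 4 • (a * (D.y * D.x)) + D.basis.repr v 5 • (a * (D.z * D.x)) := by
  conv_lhs => rw [← D.basis.sum_repr v]
  simp only [Fin.sum_univ_six, D.hb0, D.hb1, D.hb2, D.hb3, D.hb4, D.hb5, mul_add,
    mul_smul_comm, mul_one]

theorem x_mul (v : Λ) :
    D.x * v = D.basis.repr v 0 • D.x + (-q * D.basis.repr v 2) • (D.y * D.x) +
      D.basis.repr v 3 • (D.z * D.x) := by
  rw [D.mul_eq_sum_repr, D.x_mul_y, D.x_mul_z, ← mul_assoc, ← mul_assoc, D.x_mul_y,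
    D.x_mul_z, smul_mul_assoc, mul_assoc, mul_assoc, D.hxx]
  simp [mul_smul, smul_comm q]

theorem y_mul (v : Λ) :
    D.y * v = D.basis.repr v 0 • D.y + D.basis.repr v 1 • (D.y * D.x) := by
  rw [D.mul_eq_sum_repr, D.hyy, D.hyz, ← mul_assoc, ← mul_assoc, D.hyy, D.hyz]
  simp

theorem z_mul (v : Λ) :
    D.z * v = D.basis.repr v 0 • D.z + (D.basis.repr v 1 + D.basis.repr v 2) • (D.z * D.x) := by
  rw [D.mul_eq_sum_repr, D.z_mul_y, D.hzz, ← mul_assoc, ← mul_assoc, D.z_mul_y, D.hzz,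
    mul_assoc, D.hxx]
  simp [add_smul, add_assoc]

theorem yx_mul (v : Λ) : D.y * D.x * v = D.basis.repr v 0 • (D.y * D.x) := by
  rw [mul_assoc, D.x_mul]
  simp [mul_add, ← mul_assoc, D.hyy, D.hyz]

theorem zx_mul (v : Λ) : D.z * D.x * v = D.basis.repr v 0 • (D.z * D.x) := by
  have hzxx : D.z * D.x * D.x = 0 := by rw [mul_assoc, D.hxx, mul_zero]
  rw [mul_assoc, D.x_mul]
  simp [mul_add, ← mul_assoc, D.hzz, D.z_mul_y, hzxx]

theorem w_zero (b c : k) : D.w 0 b c = b • D.y + c • D.z := by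
  simp [w]

theorem U_le_ker_toSpanSingleton (a b c : k) {t : Λ} (hw : D.w a b c * t = 0)
    (hyx : D.y * D.x * t = 0) (hzx : D.z * D.x * t = 0) :
    D.U a b c ≤ LinearMap.ker (LinearMap.toSpanSingleton Λ Λ t) := by
  rw [U, Submodule.span_le]
  rintro s (rfl | rfl | rfl) <;> assumption

theorem U_zero_le_ker_z (b c : k) :
    D.U 0 b c ≤ LinearMap.ker (LinearMap.toSpanSingleton Λ Λ D.z) :=
  D.U_le_ker_toSpanSingleton 0 b c (by simp [w_zero, add_mul, D.hyz, D.hzz])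
    (by simp [yx_mul]) (by simp [zx_mul])

theorem z_notMem_U_zero_one_zero : D.z ∉ D.U 0 1 0 := by
  have hU := D.U_le_ker_toSpanSingleton 0 1 0 (t := D.y) (by simp [w_zero, D.hyy])
    (by simp [yx_mul]) (by simp [zx_mul])
  intro hz
  have := hU hz
  simp [D.z_mul_y, D.zx_ne_zero] at this

theorem y_notMem_U_zero_zero_one : D.y ∉ D.U 0 0 1 := by
  have hU := D.U_le_ker_toSpanSingleton 0 0 1 (t := D.x - D.y)
    (by simp [w_zero, mul_sub, D.z_mul_y]) (by simp [yx_mul]) (by simp [zx_mul])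
  intro hy
  have := hU hy
  simp [mul_sub, D.hyy, D.yx_ne_zero] at this

theorem repr_zero_eq_zero_of_w_mul_eq_zero {b c : k} (hbc : b ≠ 0 ∨ c ≠ 0) {u : Λ}
    (h : D.w 0 b c * u = 0) : D.basis.repr u 0 = 0 := by
  rw [w_zero, add_mul, smul_mul_assoc, smul_mul_assoc, D.y_mul, D.z_mul] at h
  have hy := congrArg (D.basis.repr · 2) h
  have hz := congrArg (D.basis.repr · 3) h
  simp at hy hz
  tauto

/-- `y * u`, `z * u` and `x * u` lie in the socle, on which `v` acts by its constant term. -/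
theorem y_mul_eq_zero_and_z_mul_eq_zero_of_z_eq_mul {u v : Λ} (hu : D.basis.repr u 0 = 0)
    (hz : D.z = u * v) : D.y * u = 0 ∧ D.z * u = 0 := by
  have hyu : D.y * u = D.basis.repr u 1 • (D.y * D.x) := by
    rw [D.y_mul, hu, zero_smul, zero_add]
  have hzu : D.z * u = (D.basis.repr u 1 + D.basis.repr u 2) • (D.z * D.x) := by
    rw [D.z_mul, hu, zero_smul, zero_add]
  have hv : D.basis.repr v 0 ≠ 0 := by
    intro hv
    apply D.zx_ne_zero
    rw [← D.x_mul_z, hz, ← mul_assoc, D.x_mul, hu]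
    simp [add_mul, D.yx_mul, D.zx_mul, hv]
  have hyz : (D.basis.repr u 1 * D.basis.repr v 0) • (D.y * D.x) = 0 := by
    rw [← smul_smul, ← D.yx_mul, ← smul_mul_assoc, ← hyu, mul_assoc, ← hz, D.hyz]
  have hzz : ((D.basis.repr u 1 + D.basis.repr u 2) * D.basis.repr v 0) • (D.z * D.x) = 0 := by
    rw [← smul_smul, ← D.zx_mul, ← smul_mul_assoc, ← hzu, mul_assoc, ← hz, D.hzz]
  simp only [smul_eq_zero, D.yx_ne_zero, D.zx_ne_zero, hv, mul_eq_zero, or_false] at hyz hzz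
  exact ⟨by rw [hyu, hyz, zero_smul], by rw [hzu, hzz, zero_smul]⟩

theorem y_mem_U_and_z_mem_U_of_injective_of_factors {b c : k} (hbc : b ≠ 0 ∨ c ≠ 0)
    (φ : D.M 0 b c →ₗ[Λ] Λ) (hinj : Function.Injective φ)
    (hfac : ∀ ψ : D.M 0 b c →ₗ[Λ] Λ, ∃ g : Λ →ₗ[Λ] Λ, ψ = g ∘ₗ φ) :
    D.y ∈ D.U 0 b c ∧ D.z ∈ D.U 0 b c := by
  set u := φ (Submodule.Quotient.mk 1)
  have mem_of_mul_eq_zero : ∀ a : Λ, a * u = 0 → a ∈ D.U 0 b c := fun a ha =>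
    (Submodule.Quotient.mk_eq_zero _).mp <| hinj <| by
      rw [φ.apply_quotient_mk_eq_mul, ha, map_zero]
  have hwu : D.w 0 b c * u = 0 := by
    have hw : (Submodule.Quotient.mk (D.w 0 b c) : D.M 0 b c) = 0 :=
      (Submodule.Quotient.mk_eq_zero _).mpr (Submodule.subset_span (by simp))
    rw [← φ.apply_quotient_mk_eq_mul, hw, map_zero]
  obtain ⟨g, hg⟩ := hfac ((D.U 0 b c).liftQ _ (D.U_zero_le_ker_z b c))
  obtain ⟨v, hv⟩ := exists_eq_mul_of_liftQ_eq_comp φ _ hg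
  obtain ⟨hyu, hzu⟩ := D.y_mul_eq_zero_and_z_mul_eq_zero_of_z_eq_mul
    (D.repr_zero_eq_zero_of_w_mul_eq_zero hbc hwu) hv
  exact ⟨mem_of_mul_eq_zero _ hyu, mem_of_mul_eq_zero _ hzu⟩

end LambdaAlg

theorem statement12_general (k : Type) [Field k] (q : k)
    (Λ : Type) [Ring Λ] [Algebra k Λ] (D : LambdaAlg k q Λ) :
    (¬ ∃ φ : D.M 0 1 0 →ₗ[Λ] Λ, Function.Injective φ ∧
        ∀ ψ : D.M 0 1 0 →ₗ[Λ] Λ, ∃ g : Λ →ₗ[Λ] Λ, ψ = g ∘ₗ φ)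
    ∧ (¬ ∃ φ : D.M 0 0 1 →ₗ[Λ] Λ, Function.Injective φ ∧
        ∀ ψ : D.M 0 0 1 →ₗ[Λ] Λ, ∃ g : Λ →ₗ[Λ] Λ, ψ = g ∘ₗ φ) := by
  constructor
  · rintro ⟨φ, hinj, hfac⟩
    exact D.z_notMem_U_zero_one_zero
      (D.y_mem_U_and_z_mem_U_of_injective_of_factors (by simp) φ hinj hfac).2
  · rintro ⟨φ, hinj, hfac⟩
    exact D.y_notMem_U_zero_zero_one
      (D.y_mem_U_and_z_mem_U_of_injective_of_factors (by simp) φ hinj hfac).1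

/-- For `M = M(0,1,0)` or `M(0,0,1)`, no injective `Λ`-linear map `M → Λ` is a
left `add(Λ)`-approximation. -/
theorem statement12 (k : Type) [Field k] (q : k) (hq : q ≠ 0)
    (Λ : Type) [Ring Λ] [Algebra k Λ] (D : LambdaAlg k q Λ) :
    (¬ ∃ φ : D.M 0 1 0 →ₗ[Λ] Λ, Function.Injective φ ∧
        ∀ ψ : D.M 0 1 0 →ₗ[Λ] Λ, ∃ g : Λ →ₗ[Λ] Λ, ψ = g ∘ₗ φ)
    ∧ (¬ ∃ φ : D.M 0 0 1 →ₗ[Λ] Λ, Function.Injective φ ∧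
        ∀ ψ : D.M 0 0 1 →ₗ[Λ] Λ, ∃ g : Λ →ₗ[Λ] Λ, ψ = g ∘ₗ φ) :=
  statement12_general k q Λ D
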